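/- arXiv:2008.05897 — 2 statements merged into one kernel-verified Lean document; each statement's English description precedes it below -/
import Mathlib

section
/- Let S, I, I₁, I₂, R : [0,∞) → ℝ be differentiable functions satisfying system (1) with nonnegative initial data S(0) ≥ 0, I(0) ≥ 0, I₁(0) ≥ 0, I₂(0) ≥ 0, R(0) ≥ 0. Then S(t) ≥ 0, I(t) ≥ 0, I₁(t) ≥ 0, I₂(t) ≥ 0 and R(t) ≥ 0 for all t ≥ 0; that is, the nonnegative orthant ℝ₊⁵ is positively invariant for system (1). -/
open Set Filter Topology Real

lemma nonneg_of_small (x E : ℝ) (hE : 0 < E) (h : ∀ η, 0 < η → 0 < x + η * E) : 0 ≤ x := by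
  by_contra hx
  push_neg at hx
  have h2 := h (-x / (2*E)) (div_pos (by linarith) (by linarith))
  have h3 : (-x/(2*E)) * E = -x/2 := by field_simp
  rw [h3] at h2
  linarith
open Set Filter Topology Real

lemma slope_nonpos_of_first_zero (f : ℝ → ℝ) (t₀ d : ℝ) (h₀ : 0 < t₀)
    (hpos : ∀ t, 0 ≤ t → t < t₀ → 0 < f t) (hz : f t₀ = 0)
    (hdf : HasDerivAt f d t₀) : d ≤ 0 := by
  have h1 : Tendsto (slope f t₀) (𝓝[≠] t₀) (𝓝 d) :=
    hasDerivAt_iff_tendsto_slope.mp hdf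
  have h2 : Tendsto (slope f t₀) (𝓝[<] t₀) (𝓝 d) :=
    h1.mono_left (nhdsWithin_mono _ fun x hx => ne_of_lt hx)
  refine le_of_tendsto h2 ?_
  have hmem : Ioo (0:ℝ) t₀ ∈ 𝓝[<] t₀ := Ioo_mem_nhdsLT_of_mem ⟨h₀, le_refl _⟩
  filter_upwards [hmem] with t ht
  have hft : 0 < f t := hpos t (le_of_lt ht.1) ht.2
  have hs : slope f t₀ t = f t / (t - t₀) := by
    rw [slope_def_field, hz]; ring
  rw [hs]
  exact div_nonpos_of_nonneg_of_nonpos (le_of_lt hft) (by linarith [ht.2])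

lemma barrier3 (g₁ g₂ g₃ : ℝ → ℝ) (T : ℝ)
    (hc : ∀ t ∈ Icc (0:ℝ) T, ContinuousAt g₁ t ∧ ContinuousAt g₂ t ∧ ContinuousAt g₃ t)
    (h01 : 0 < g₁ 0) (h02 : 0 < g₂ 0) (h03 : 0 < g₃ 0)
    (hd : ∀ t ∈ Ioc (0:ℝ) T, 0 ≤ g₁ t → 0 ≤ g₂ t → 0 ≤ g₃ t →
       ((g₁ t = 0 → ∃ d, 0 < d ∧ HasDerivAt g₁ d t) ∧
        (g₂ t = 0 → ∃ d, 0 < d ∧ HasDerivAt g₂ d t) ∧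
        (g₃ t = 0 → ∃ d, 0 < d ∧ HasDerivAt g₃ d t))) :
    ∀ t ∈ Icc (0:ℝ) T, 0 < g₁ t ∧ 0 < g₂ t ∧ 0 < g₃ t := by
  set h : ℝ → ℝ := fun t => min (g₁ t) (min (g₂ t) (g₃ t)) with hh
  have hgle : ∀ t, h t ≤ g₁ t ∧ h t ≤ g₂ t ∧ h t ≤ g₃ t := fun t =>
    ⟨min_le_left _ _, le_trans (min_le_right _ _) (min_le_left _ _),
     le_trans (min_le_right _ _) (min_le_right _ _)⟩
  have hch : ∀ t ∈ Icc (0:ℝ) T, ContinuousAt h t := by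
    intro t ht
    exact ((hc t ht).1).min (((hc t ht).2.1).min ((hc t ht).2.2))
  suffices hkey : ∀ t ∈ Icc (0:ℝ) T, 0 < h t by
    intro t ht
    exact ⟨lt_of_lt_of_le (hkey t ht) (hgle t).1, lt_of_lt_of_le (hkey t ht) (hgle t).2.1,
      lt_of_lt_of_le (hkey t ht) (hgle t).2.2⟩
  by_contra hcon
  push_neg at hcon
  obtain ⟨u, hu, huh⟩ := hcon
  set A : Set ℝ := {s | s ∈ Icc (0:ℝ) T ∧ h s ≤ 0} with hA
  have hAne : A.Nonempty := ⟨u, hu, huh⟩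
  have hbdd : BddBelow A := ⟨0, fun x hx => hx.1.1⟩
  set t₀ := sInf A with ht₀
  have ht₀le : ∀ a ∈ A, t₀ ≤ a := fun a ha => csInf_le hbdd ha
  have ht₀mem : t₀ ∈ Icc (0:ℝ) T := by
    constructor
    · exact le_csInf hAne fun x hx => hx.1.1
    · exact le_trans (ht₀le u ⟨hu, huh⟩) hu.2
  have h0pos : 0 < h 0 := lt_min h01 (lt_min h02 h03)
  -- h t₀ ≤ 0
  have ht₀np : h t₀ ≤ 0 := by
    by_contra hpos'
    push_neg at hpos'
    have hev : {s | 0 < h s} ∈ 𝓝 t₀ := (hch t₀ ht₀mem) (lt_mem_nhds hpos')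
    obtain ⟨δ, hδ, hball⟩ := Metric.mem_nhds_iff.mp hev
    obtain ⟨a, haA, halt⟩ := exists_lt_of_csInf_lt hAne (lt_add_of_pos_right t₀ hδ)
    have : a ∈ Metric.ball t₀ δ := by
      rw [Metric.mem_ball, Real.dist_eq, abs_lt]
      constructor <;> [linarith [ht₀le a haA]; linarith]
    exact absurd haA.2 (not_le.mpr (hball this))
  have ht₀pos : 0 < t₀ := by
    rcases lt_or_eq_of_le ht₀mem.1 with h' | h'
    · exact h'
    · exfalso
      have he : h t₀ = h 0 := by rw [← h']
      linarith
  have hbelow : ∀ t, 0 ≤ t → t < t₀ → 0 < h t := by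
    intro t ht0 htlt
    by_contra hle
    push_neg at hle
    have : t ∈ A := ⟨⟨ht0, le_trans (le_of_lt htlt) ht₀mem.2⟩, hle⟩
    exact absurd (ht₀le t this) (not_le.mpr htlt)
  -- h t₀ ≥ 0 by left continuity
  have ht₀nn : 0 ≤ h t₀ := by
    have htend : Tendsto h (𝓝[<] t₀) (𝓝 (h t₀)) :=
      (hch t₀ ht₀mem).tendsto.mono_left nhdsWithin_le_nhds
    refine ge_of_tendsto htend ?_
    filter_upwards [Ioo_mem_nhdsLT_of_mem ⟨ht₀pos, le_refl t₀⟩] with s hs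
    exact le_of_lt (hbelow s (le_of_lt hs.1) hs.2)
  have ht₀z : h t₀ = 0 := le_antisymm ht₀np ht₀nn
  have hg1 : 0 ≤ g₁ t₀ := ht₀z ▸ (hgle t₀).1
  have hg2 : 0 ≤ g₂ t₀ := ht₀z ▸ (hgle t₀).2.1
  have hg3 : 0 ≤ g₃ t₀ := ht₀z ▸ (hgle t₀).2.2
  have hzero : g₁ t₀ = 0 ∨ g₂ t₀ = 0 ∨ g₃ t₀ = 0 := by
    by_contra hno
    push_neg at hno
    have : 0 < h t₀ := lt_min (lt_of_le_of_ne hg1 (Ne.symm hno.1))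
      (lt_min (lt_of_le_of_ne hg2 (Ne.symm hno.2.1)) (lt_of_le_of_ne hg3 (Ne.symm hno.2.2)))
    linarith [ht₀z ▸ this]
  have hdd := hd t₀ ⟨ht₀pos, ht₀mem.2⟩ hg1 hg2 hg3
  rcases hzero with hz | hz | hz
  · obtain ⟨d, hdpos, hdf⟩ := hdd.1 hz
    have := slope_nonpos_of_first_zero g₁ t₀ d ht₀pos
      (fun t ht0 htlt => lt_of_lt_of_le (hbelow t ht0 htlt) (hgle t).1) hz hdf
    linarith
  · obtain ⟨d, hdpos, hdf⟩ := hdd.2.1 hz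
    have := slope_nonpos_of_first_zero g₂ t₀ d ht₀pos
      (fun t ht0 htlt => lt_of_lt_of_le (hbelow t ht0 htlt) (hgle t).2.1) hz hdf
    linarith
  · obtain ⟨d, hdpos, hdf⟩ := hdd.2.2 hz
    have := slope_nonpos_of_first_zero g₃ t₀ d ht₀pos
      (fun t ht0 htlt => lt_of_lt_of_le (hbelow t ht0 htlt) (hgle t).2.2) hz hdf
    linarith

set_option maxHeartbeats 1000000 in
/-- The nonnegative orthant `ℝ₊⁵` is positively invariant for system (1):
solutions with nonnegative initial data stay nonnegative for all `t ≥ 0`. -/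
theorem nonneg_invariant
    (Λ β μ α₁ α₂ d θ₁ θ₂ ε : ℝ)
    (hΛ : 0 < Λ) (hβ : 0 < β) (hμ : 0 < μ) (hα₁ : 0 < α₁) (hα₂ : 0 < α₂)
    (hd : 0 < d) (hθ₁ : 0 < θ₁) (hθ₂ : 0 < θ₂) (hε : ε ∈ Set.Ioo (0:ℝ) 1)
    (S I I₁ I₂ R : ℝ → ℝ)
    (hS : ∀ t ≥ (0:ℝ), HasDerivAt S
      (Λ - β * S t * (I t + ε * I₁ t + I₂ t) - μ * S t) t)
    (hI : ∀ t ≥ (0:ℝ), HasDerivAt I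
      (β * S t * (I t + ε * I₁ t + I₂ t) - (μ + α₁ + α₂) * I t) t)
    (hI₁ : ∀ t ≥ (0:ℝ), HasDerivAt I₁ (α₁ * I t - (μ + d + θ₁) * I₁ t) t)
    (hI₂ : ∀ t ≥ (0:ℝ), HasDerivAt I₂ (α₂ * I t - (μ + d + θ₂) * I₂ t) t)
    (hR : ∀ t ≥ (0:ℝ), HasDerivAt R (θ₁ * I₁ t + θ₂ * I₂ t - μ * R t) t)
    (hS0 : 0 ≤ S 0) (hI0 : 0 ≤ I 0) (hI₁0 : 0 ≤ I₁ 0) (hI₂0 : 0 ≤ I₂ 0)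
    (hR0 : 0 ≤ R 0) :
    ∀ t ≥ (0:ℝ), 0 ≤ S t ∧ 0 ≤ I t ∧ 0 ≤ I₁ t ∧ 0 ≤ I₂ t ∧ 0 ≤ R t := by
  intro T hT
  obtain ⟨hε0, hε1⟩ := hε
  -- continuity of the solution components on [0, T]
  have cS : ∀ t ∈ Icc (0:ℝ) T, ContinuousAt S t := fun t ht => (hS t ht.1).continuousAt
  have cI : ∀ t ∈ Icc (0:ℝ) T, ContinuousAt I t := fun t ht => (hI t ht.1).continuousAt
  have cI₁ : ∀ t ∈ Icc (0:ℝ) T, ContinuousAt I₁ t := fun t ht => (hI₁ t ht.1).continuousAt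
  have cI₂ : ∀ t ∈ Icc (0:ℝ) T, ContinuousAt I₂ t := fun t ht => (hI₂ t ht.1).continuousAt
  have cR : ∀ t ∈ Icc (0:ℝ) T, ContinuousAt R t := fun t ht => (hR t ht.1).continuousAt
  -- a uniform bound K on the coefficients
  have hcont : ContinuousOn (fun t => β * (|S t| + |I t| + |I₁ t| + |I₂ t|) + μ)
      (Icc (0:ℝ) T) := by
    intro t ht
    have h : ContinuousAt (fun u => β * (|S u| + |I u| + |I₁ u| + |I₂ u|) + μ) t :=
      (((((cS t ht).abs.add (cI t ht).abs).add (cI₁ t ht).abs).add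
        (cI₂ t ht).abs).const_mul β).add continuousAt_const
    exact h.continuousWithinAt
  obtain ⟨C, hC⟩ := isCompact_Icc.exists_bound_of_continuousOn hcont
  obtain ⟨K, hK1, hKa1, hKa2, hKC⟩ : ∃ K : ℝ, (1:ℝ) ≤ K ∧ α₁ ≤ K ∧ α₂ ≤ K ∧ C ≤ K :=
    ⟨max (max 1 (max α₁ α₂)) C,
      le_trans (le_max_left _ _) (le_max_left _ _),
      le_trans (le_trans (le_max_left _ _) (le_max_right _ _)) (le_max_left _ _),
      le_trans (le_trans (le_max_right _ _) (le_max_right _ _)) (le_max_left _ _),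
      le_max_right _ _⟩
  have hKpos : (0:ℝ) < K := lt_of_lt_of_le one_pos hK1
  have hCb : ∀ t ∈ Icc (0:ℝ) T, β * (|S t| + |I t| + |I₁ t| + |I₂ t|) + μ ≤ K := by
    intro t ht
    have h1 := hC t ht
    rw [Real.norm_eq_abs] at h1
    exact le_trans (le_trans (le_abs_self _) h1) hKC
  have hKS : ∀ t ∈ Icc (0:ℝ) T, β * |S t| ≤ K := by
    intro t ht
    have h2 := hCb t ht
    nlinarith [mul_nonneg hβ.le (abs_nonneg (I t)), mul_nonneg hβ.le (abs_nonneg (I₁ t)),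
      mul_nonneg hβ.le (abs_nonneg (I₂ t)), hμ.le]
  have hKc : ∀ t ∈ Icc (0:ℝ) T, β * (|I t| + |I₁ t| + |I₂ t|) + μ ≤ K := by
    intro t ht
    have h2 := hCb t ht
    nlinarith [mul_nonneg hβ.le (abs_nonneg (S t))]
  -- derivative of the barrier term
  have hexp : ∀ (η s : ℝ), HasDerivAt (fun u => η * Real.exp (4*K*u))
      (η * (Real.exp (4*K*s) * (4*K*1))) s := by
    intro η s
    exact (((hasDerivAt_id s).const_mul (4*K)).exp).const_mul η
  have hexpc : ∀ (η : ℝ), Continuous (fun u : ℝ => η * Real.exp (4*K*u)) := by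
    intro η
    exact continuous_const.mul (Real.continuous_exp.comp (continuous_const.mul continuous_id))
  have hexple : ∀ t ∈ Icc (0:ℝ) T, Real.exp (4*K*t) ≤ Real.exp (4*K*T) := by
    intro t ht
    exact Real.exp_le_exp.mpr (by nlinarith [ht.2, hKpos])
  -- Step 1: S is nonnegative on [0, T]
  have hS3 : ∀ η, 0 < η → ∀ t ∈ Icc (0:ℝ) T, 0 < S t + η * Real.exp (4*K*t) := by
    intro η hη
    have main : ∀ s ∈ Ioc (0:ℝ) T, (fun u => S u + η * Real.exp (4*K*u)) s = 0 →
        ∃ d', 0 < d' ∧ HasDerivAt (fun u => S u + η * Real.exp (4*K*u)) d' s := by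
      intro s hs hz
      refine ⟨_, ?_, (hS s hs.1.le).add (hexp η s)⟩
      have he : (0:ℝ) < Real.exp (4*K*s) := Real.exp_pos _
      have hSs : S s = -(η * Real.exp (4*K*s)) := by
        have h0 : S s + η * Real.exp (4*K*s) = 0 := hz
        linarith
      have hsI : s ∈ Icc (0:ℝ) T := ⟨hs.1.le, hs.2⟩
      have hbound : -K ≤ β * (I s + ε * I₁ s + I₂ s) + μ := by
        have h2 := hKc s hsI
        nlinarith [mul_nonneg hβ.le (by linarith [neg_abs_le (I s)] : (0:ℝ) ≤ I s + |I s|),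
          mul_nonneg hβ.le (mul_nonneg hε0.le
            (by linarith [neg_abs_le (I₁ s)] : (0:ℝ) ≤ I₁ s + |I₁ s|)),
          mul_nonneg hβ.le (mul_nonneg (by linarith : (0:ℝ) ≤ 1 - ε) (abs_nonneg (I₁ s))),
          mul_nonneg hβ.le (by linarith [neg_abs_le (I₂ s)] : (0:ℝ) ≤ I₂ s + |I₂ s|)]
      have hkey : 0 ≤ (β * (I s + ε * I₁ s + I₂ s) + μ + K) * (η * Real.exp (4*K*s)) :=
        mul_nonneg (by linarith) (mul_pos hη he).le
      nlinarith [mul_pos hη he, hΛ, hKpos]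
    have key := barrier3 (fun u => S u + η * Real.exp (4*K*u))
      (fun u => S u + η * Real.exp (4*K*u)) (fun u => S u + η * Real.exp (4*K*u)) T
      (fun s hs => ⟨(cS s hs).add (hexpc η).continuousAt, (cS s hs).add (hexpc η).continuousAt,
        (cS s hs).add (hexpc η).continuousAt⟩)
      (by show 0 < S 0 + η * Real.exp (4*K*0)
          rw [show (4*K*0 : ℝ) = 0 by ring, Real.exp_zero]; linarith)
      (by show 0 < S 0 + η * Real.exp (4*K*0)
          rw [show (4*K*0 : ℝ) = 0 by ring, Real.exp_zero]; linarith)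
      (by show 0 < S 0 + η * Real.exp (4*K*0)
          rw [show (4*K*0 : ℝ) = 0 by ring, Real.exp_zero]; linarith)
      (fun s hs _ _ _ => ⟨main s hs, main s hs, main s hs⟩)
    exact fun t ht => (key t ht).1
  have hSnn : ∀ t ∈ Icc (0:ℝ) T, 0 ≤ S t := by
    intro t ht
    apply nonneg_of_small _ (Real.exp (4*K*T)) (Real.exp_pos _)
    intro η hη
    have h4 := hS3 η hη t ht
    have h3 : η * Real.exp (4*K*t) ≤ η * Real.exp (4*K*T) :=
      mul_le_mul_of_nonneg_left (hexple t ht) hη.le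
    linarith
  -- Step 2: I, I₁, I₂ are nonnegative on [0, T]
  have hI3 : ∀ η, 0 < η → ∀ t ∈ Icc (0:ℝ) T, 0 < I t + η * Real.exp (4*K*t) ∧
      0 < I₁ t + η * Real.exp (4*K*t) ∧ 0 < I₂ t + η * Real.exp (4*K*t) := by
    intro η hη
    refine barrier3 (fun u => I u + η * Real.exp (4*K*u))
      (fun u => I₁ u + η * Real.exp (4*K*u)) (fun u => I₂ u + η * Real.exp (4*K*u)) T
      ?_ ?_ ?_ ?_ ?_
    · intro s hs
      exact ⟨(cI s hs).add (hexpc η).continuousAt, (cI₁ s hs).add (hexpc η).continuousAt,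
        (cI₂ s hs).add (hexpc η).continuousAt⟩
    · show 0 < I 0 + η * Real.exp (4*K*0)
      rw [show (4*K*0 : ℝ) = 0 by ring, Real.exp_zero]; linarith
    · show 0 < I₁ 0 + η * Real.exp (4*K*0)
      rw [show (4*K*0 : ℝ) = 0 by ring, Real.exp_zero]; linarith
    · show 0 < I₂ 0 + η * Real.exp (4*K*0)
      rw [show (4*K*0 : ℝ) = 0 by ring, Real.exp_zero]; linarith
    · intro s hs hg1 hg2 hg3
      have hsI : s ∈ Icc (0:ℝ) T := ⟨hs.1.le, hs.2⟩
      have he : (0:ℝ) < Real.exp (4*K*s) := Real.exp_pos _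
      have hb0 : 0 ≤ β * S s := mul_nonneg hβ.le (hSnn s hsI)
      have hbK : β * S s ≤ K := by
        have h6 := hKS s hsI
        have habs : S s ≤ |S s| := le_abs_self _
        nlinarith
      have hIge : (0:ℝ) ≤ I s + η * Real.exp (4*K*s) := hg1
      have hI1ge : (0:ℝ) ≤ I₁ s + η * Real.exp (4*K*s) := hg2
      have hI2ge : (0:ℝ) ≤ I₂ s + η * Real.exp (4*K*s) := hg3
      refine ⟨fun hz => ⟨_, ?_, (hI s hs.1.le).add (hexp η s)⟩,
        fun hz => ⟨_, ?_, (hI₁ s hs.1.le).add (hexp η s)⟩,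
        fun hz => ⟨_, ?_, (hI₂ s hs.1.le).add (hexp η s)⟩⟩
      · -- I-component hits zero
        have hIs : I s = -(η * Real.exp (4*K*s)) := by
          have h0 : I s + η * Real.exp (4*K*s) = 0 := hz
          linarith
        have hεI₁ : ε * I₁ s ≥ -(η * Real.exp (4*K*s)) := by
          nlinarith [mul_nonneg hε0.le hI1ge,
            mul_nonneg (by linarith : (0:ℝ) ≤ 1 - ε) (mul_pos hη he).le]
        have h5 : β * S s * (I s + ε * I₁ s + I₂ s) ≥ -(3 * K * (η * Real.exp (4*K*s))) := by
          nlinarith [mul_nonneg hb0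
              (by linarith : (0:ℝ) ≤ I s + ε * I₁ s + I₂ s + 3 * (η * Real.exp (4*K*s))),
            mul_nonneg (by linarith : (0:ℝ) ≤ K - β * S s)
              (by positivity : (0:ℝ) ≤ 3 * (η * Real.exp (4*K*s)))]
        nlinarith [mul_pos hη he, mul_nonneg (by linarith : (0:ℝ) ≤ μ + α₁ + α₂)
          (mul_pos hη he).le, mul_nonneg (by linarith : (0:ℝ) ≤ K - 1) (mul_pos hη he).le]
      · -- I₁-component hits zero
        have hI1s : I₁ s = -(η * Real.exp (4*K*s)) := by
          have h0 : I₁ s + η * Real.exp (4*K*s) = 0 := hz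
          linarith
        nlinarith [mul_pos hη he, mul_nonneg (by linarith : (0:ℝ) ≤ μ + d + θ₁)
          (mul_pos hη he).le, mul_nonneg (by linarith : (0:ℝ) ≤ K - α₁) (mul_pos hη he).le,
          mul_nonneg hα₁.le hIge,
          mul_nonneg (by linarith : (0:ℝ) ≤ 3*K) (mul_pos hη he).le]
      · -- I₂-component hits zero
        have hI2s : I₂ s = -(η * Real.exp (4*K*s)) := by
          have h0 : I₂ s + η * Real.exp (4*K*s) = 0 := hz
          linarith
        nlinarith [mul_pos hη he, mul_nonneg (by linarith : (0:ℝ) ≤ μ + d + θ₂)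
          (mul_pos hη he).le, mul_nonneg (by linarith : (0:ℝ) ≤ K - α₂) (mul_pos hη he).le,
          mul_nonneg hα₂.le hIge,
          mul_nonneg (by linarith : (0:ℝ) ≤ 3*K) (mul_pos hη he).le]
  have hInn : ∀ t ∈ Icc (0:ℝ) T, 0 ≤ I t ∧ 0 ≤ I₁ t ∧ 0 ≤ I₂ t := by
    intro t ht
    have h3 : ∀ η : ℝ, 0 < η → η * Real.exp (4*K*t) ≤ η * Real.exp (4*K*T) :=
      fun η hη => mul_le_mul_of_nonneg_left (hexple t ht) hη.le
    refine ⟨nonneg_of_small _ (Real.exp (4*K*T)) (Real.exp_pos _) fun η hη => ?_,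
      nonneg_of_small _ (Real.exp (4*K*T)) (Real.exp_pos _) fun η hη => ?_,
      nonneg_of_small _ (Real.exp (4*K*T)) (Real.exp_pos _) fun η hη => ?_⟩
    · have h4 := (hI3 η hη t ht).1; linarith [h3 η hη]
    · have h4 := (hI3 η hη t ht).2.1; linarith [h3 η hη]
    · have h4 := (hI3 η hη t ht).2.2; linarith [h3 η hη]
  -- Step 3: R is nonnegative on [0, T]
  have hR3 : ∀ η, 0 < η → ∀ t ∈ Icc (0:ℝ) T, 0 < R t + η * Real.exp (4*K*t) := by
    intro η hη
    have main : ∀ s ∈ Ioc (0:ℝ) T, (fun u => R u + η * Real.exp (4*K*u)) s = 0 →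
        ∃ d', 0 < d' ∧ HasDerivAt (fun u => R u + η * Real.exp (4*K*u)) d' s := by
      intro s hs hz
      refine ⟨_, ?_, (hR s hs.1.le).add (hexp η s)⟩
      have he : (0:ℝ) < Real.exp (4*K*s) := Real.exp_pos _
      have hsI : s ∈ Icc (0:ℝ) T := ⟨hs.1.le, hs.2⟩
      have hRs : R s = -(η * Real.exp (4*K*s)) := by
        have h0 : R s + η * Real.exp (4*K*s) = 0 := hz
        linarith
      have h1 : 0 ≤ θ₁ * I₁ s := mul_nonneg hθ₁.le (hInn s hsI).2.1
      have h2 : 0 ≤ θ₂ * I₂ s := mul_nonneg hθ₂.le (hInn s hsI).2.2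
      nlinarith [mul_pos hη he, mul_nonneg hμ.le (mul_pos hη he).le,
        mul_nonneg (by linarith : (0:ℝ) ≤ K - 1) (mul_pos hη he).le]
    have key := barrier3 (fun u => R u + η * Real.exp (4*K*u))
      (fun u => R u + η * Real.exp (4*K*u)) (fun u => R u + η * Real.exp (4*K*u)) T
      (fun s hs => ⟨(cR s hs).add (hexpc η).continuousAt, (cR s hs).add (hexpc η).continuousAt,
        (cR s hs).add (hexpc η).continuousAt⟩)
      (by show 0 < R 0 + η * Real.exp (4*K*0)
          rw [show (4*K*0 : ℝ) = 0 by ring, Real.exp_zero]; linarith)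
      (by show 0 < R 0 + η * Real.exp (4*K*0)
          rw [show (4*K*0 : ℝ) = 0 by ring, Real.exp_zero]; linarith)
      (by show 0 < R 0 + η * Real.exp (4*K*0)
          rw [show (4*K*0 : ℝ) = 0 by ring, Real.exp_zero]; linarith)
      (fun s hs _ _ _ => ⟨main s hs, main s hs, main s hs⟩)
    exact fun t ht => (key t ht).1
  have hRnn : ∀ t ∈ Icc (0:ℝ) T, 0 ≤ R t := by
    intro t ht
    apply nonneg_of_small _ (Real.exp (4*K*T)) (Real.exp_pos _)
    intro η hη
    have h4 := hR3 η hη t ht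
    have h3 : η * Real.exp (4*K*t) ≤ η * Real.exp (4*K*T) :=
      mul_le_mul_of_nonneg_left (hexple t ht) hη.le
    linarith
  have hTm : T ∈ Icc (0:ℝ) T := ⟨hT, le_refl T⟩
  exact ⟨hSnn T hTm, (hInn T hTm).1, (hInn T hTm).2.1, (hInn T hTm).2.2, hRnn T hTm⟩
end

section
/- Let Λ, β, μ, α₁, α₂ be positive reals with R₀ = βΛ/(μ(μ+α₁+α₂)) < 1, set S₀ = Λ/μ, and let S, I : [0,∞) → ℝ with I differentiable, I(t) ≥ 0 and 0 ≤ S(t) ≤ S₀ for all t ≥ 0, satisfying I'(t) = βS(t)I(t) − (μ+α₁+α₂)I(t). Then I(t) ≤ I(0)·e^{−(μ+α₁+α₂)(1−R₀)t} for all t ≥ 0, and consequently I(t) → 0 as t → ∞ (the disease dies out). -/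
/-!
Since `S ≤ S₀` and `β S₀ = (μ + α₁ + α₂) R₀`, the per-capita growth rate of `I` is
`β S − (μ + α₁ + α₂) ≤ −(μ + α₁ + α₂)(1 − R₀) < 0`, so Grönwall's inequality gives the
exponential bound, and `0 ≤ I` squeezes `I` to `0`.
-/

open Filter Real Set Topology

theorem le_mul_exp_of_hasDerivAt_le_mul {f f' : ℝ → ℝ} {K t₀ : ℝ}
    (hf : ∀ t ≥ t₀, HasDerivAt f (f' t) t) (bound : ∀ t ≥ t₀, f' t ≤ K * f t)
    {t : ℝ} (ht : t₀ ≤ t) : f t ≤ f t₀ * exp (K * (t - t₀)) := by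
  have hcont : ContinuousOn f (Icc t₀ t) := fun x hx => (hf x hx.1).continuousAt.continuousWithinAt
  simpa only [gronwallBound_ε0] using
    le_gronwallBound_of_liminf_deriv_right_le (K := K) (ε := 0) hcont
      (fun x hx _ hr => (hf x hx.1).hasDerivWithinAt.liminf_right_slope_le hr) le_rfl
      (fun x hx => (bound x hx.1).trans_eq (add_zero _).symm) t ⟨ht, le_rfl⟩

theorem tendsto_zero_of_nonneg_of_le_mul_exp {f : ℝ → ℝ} {C K : ℝ} (hK : K < 0)
    (hnonneg : ∀ t ≥ (0 : ℝ), 0 ≤ f t) (hle : ∀ t ≥ (0 : ℝ), f t ≤ C * exp (K * t)) :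
    Tendsto f atTop (𝓝 0) := by
  have hexp : Tendsto (fun t => C * exp (K * t)) atTop (𝓝 0) := by
    simpa using (tendsto_exp_atBot.comp (tendsto_id.const_mul_atTop_of_neg hK)).const_mul C
  exact squeeze_zero' (eventually_atTop.2 ⟨0, hnonneg⟩) (eventually_atTop.2 ⟨0, hle⟩) hexp

theorem infected_growth_le {β S S₀ a R₀ I : ℝ} (hβ : 0 ≤ β) (hI : 0 ≤ I) (hS : S ≤ S₀)
    (hβS₀ : β * S₀ = a * R₀) : β * S * I - a * I ≤ -a * (1 - R₀) * I := by
  have : β * S ≤ a * R₀ := hβS₀ ▸ mul_le_mul_of_nonneg_left hS hβ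
  nlinarith

theorem disease_dies_out_general
    (Λ β μ α₁ α₂ : ℝ)
    (hβ : 0 < β) (hμ : 0 < μ) (hα₁ : 0 < α₁) (hα₂ : 0 < α₂)
    (S₀ R₀ : ℝ) (hS₀ : S₀ = Λ / μ)
    (hR₀ : R₀ = β * Λ / (μ * (μ + α₁ + α₂))) (hR₀lt : R₀ < 1)
    (S I : ℝ → ℝ)
    (hIpos : ∀ t ≥ (0:ℝ), 0 ≤ I t)
    (hSrange : ∀ t ≥ (0:ℝ), 0 ≤ S t ∧ S t ≤ S₀)
    (hI : ∀ t ≥ (0:ℝ), HasDerivAt I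
      (β * S t * I t - (μ + α₁ + α₂) * I t) t) :
    (∀ t ≥ (0:ℝ),
        I t ≤ I 0 * Real.exp (-(μ + α₁ + α₂) * (1 - R₀) * t)) ∧
      Filter.Tendsto I Filter.atTop (nhds 0) := by
  have ha : 0 < μ + α₁ + α₂ := by positivity
  have hβS₀ : β * S₀ = (μ + α₁ + α₂) * R₀ := by
    rw [hS₀, hR₀]
    field_simp
  have decay : ∀ t ≥ (0:ℝ), I t ≤ I 0 * exp (-(μ + α₁ + α₂) * (1 - R₀) * t) := fun t ht => by
    simpa using le_mul_exp_of_hasDerivAt_le_mul hI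
      (fun s hs => infected_growth_le hβ.le (hIpos s hs) (hSrange s hs).2 hβS₀) ht
  exact ⟨decay, tendsto_zero_of_nonneg_of_le_mul_exp
    (mul_neg_of_neg_of_pos (neg_neg_of_pos ha) (sub_pos.2 hR₀lt)) hIpos decay⟩

/-- If `R₀ < 1` then the infected population decays exponentially:
`I(t) ≤ I(0)·e^{−(μ+α₁+α₂)(1−R₀)t}` for all `t ≥ 0`, hence `I(t) → 0`
as `t → ∞` (the disease dies out). -/
theorem disease_dies_out
    (Λ β μ α₁ α₂ : ℝ)
    (hΛ : 0 < Λ) (hβ : 0 < β) (hμ : 0 < μ) (hα₁ : 0 < α₁) (hα₂ : 0 < α₂)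
    (S₀ R₀ : ℝ) (hS₀ : S₀ = Λ / μ)
    (hR₀ : R₀ = β * Λ / (μ * (μ + α₁ + α₂))) (hR₀lt : R₀ < 1)
    (S I : ℝ → ℝ)
    (hIpos : ∀ t ≥ (0:ℝ), 0 ≤ I t)
    (hSrange : ∀ t ≥ (0:ℝ), 0 ≤ S t ∧ S t ≤ S₀)
    (hI : ∀ t ≥ (0:ℝ), HasDerivAt I
      (β * S t * I t - (μ + α₁ + α₂) * I t) t) :
    (∀ t ≥ (0:ℝ),
        I t ≤ I 0 * Real.exp (-(μ + α₁ + α₂) * (1 - R₀) * t)) ∧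
      Filter.Tendsto I Filter.atTop (nhds 0) :=
  disease_dies_out_general Λ β μ α₁ α₂ hβ hμ hα₁ hα₂ S₀ R₀ hS₀ hR₀ hR₀lt S I hIpos hSrange hI
end
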